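/- arXiv:2603.22256 — 5 statements merged into one kernel-verified Lean document; each statement's English description precedes it below -/
import Mathlib

section
/- For n ≥ 5, the quadratic form q(x_1, ..., x_{n-1}) = Σ_{i=1}^{n-1} x_i^2 + Σ_{1 ≤ i < j ≤ n-1} x_i x_j is universal on Z^{n-1}, i.e., every nonnegative integer is represented by q at integer arguments. -/
/-!
With `S = ∑ xᵢ` we have `2 q(x) = S² + ∑ xᵢ²`, the squared length of `(x₁, …, x₄, -S)`, so it
suffices to write every `2k` as a sum of five squares of integers with sum zero (the root lattice
`A₄`). If `x² + y² + z² = 2k - 20t²`, then `x + y + z = 2s` is even and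
`(s + t, x - s + t, y - s + t, z - s + t, -4t)` is such a vector; by the three-square theorem one
of `t = 0, 1` works unless `4 ∣ k`, and that case reduces to `k / 4`.

For the three-square theorem with `n % 4 ≠ 0`, `n % 8 ≠ 7`, Dirichlet's theorem gives a prime
`q ≡ 1 (mod 4)` such that, for `m = q` or `m = 2q`, `-m` is a square mod `n` and `n` a
square mod `m`; the box principle then solves `r² + m u² = n t²` (Legendre). As `m` is a sum of two
squares, `n t²` is a sum of three squares, and the Davenport–Cassels descent removes `t²`.
-/

open Finset

theorem Nat.sqrt_sq_lt_of_not_isSquare {k : ℕ} (hk : ¬IsSquare k) : k.sqrt ^ 2 < k :=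
  (Nat.sqrt_le' k).lt_of_ne fun h => hk ⟨k.sqrt, ((sq _).symm.trans h).symm⟩

theorem sq_le_sqrt_sq_of_abs_le {x : ℤ} {k : ℕ} (h : |x| ≤ k.sqrt) :
    x ^ 2 ≤ (k.sqrt ^ 2 : ℕ) := by
  push_cast
  exact sq_le_sq' (abs_le.1 h).1 (abs_le.1 h).2

theorem not_isSquare_of_mod_four_eq_two {n : ℕ} (hn : n % 4 = 2) : ¬IsSquare n := by
  rintro ⟨r, rfl⟩
  rcases Nat.even_or_odd' r with ⟨s, rfl | rfl⟩ <;> ring_nf at hn <;> omega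

theorem ZMod.isSquare_intCast_two_mul {k : ℕ} {a : ℤ} (hk : Odd k) (ha : Odd a)
    (h : IsSquare (a : ZMod k)) : IsSquare (a : ZMod (2 * k)) := by
  obtain ⟨w, hw⟩ := h
  have : IsSquare (a : ZMod 2 × ZMod k) :=
    ⟨(1, w), Prod.ext (by simpa using ZMod.intCast_eq_one_iff_odd.2 ha) (by simpa using hw)⟩
  simpa using this.map (ZMod.chineseRemainder (Nat.coprime_two_left.2 hk)).symm

theorem exists_prime_natCast_eq {N₁ N₂ : ℕ} [NeZero N₁] [NeZero N₂] (h : N₁.Coprime N₂)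
    {a₁ : ZMod N₁} {a₂ : ZMod N₂} (ha₁ : IsUnit a₁) (ha₂ : IsUnit a₂) :
    ∃ q : ℕ, q.Prime ∧ (q : ZMod N₁) = a₁ ∧ (q : ZMod N₂) = a₂ := by
  let e := ZMod.chineseRemainder h
  have ha : IsUnit (e.symm (a₁, a₂)) := ((Prod.isUnit_iff (x := (a₁, a₂))).2 ⟨ha₁, ha₂⟩).map _
  obtain ⟨q, -, hq, hqa⟩ := Nat.forall_exists_prime_gt_and_eq_mod ha 0
  have := congrArg e hqa
  rw [map_natCast, RingEquiv.apply_symm_apply] at this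
  exact ⟨q, hq, congrArg Prod.fst this, congrArg Prod.snd this⟩

theorem exists_eq_mul_add_four_mul_sq_le (x : ℤ) {t : ℤ} (ht : 0 < t) :
    ∃ m r : ℤ, x = t * m + r ∧ 4 * r ^ 2 ≤ t ^ 2 := by
  have h0 := Int.emod_nonneg x ht.ne'
  have ht' := Int.emod_lt_of_pos x ht
  have hx := (Int.mul_ediv_add_emod x t).symm
  by_cases hc : 2 * (x % t) ≤ t
  · exact ⟨x / t, x % t, hx, by nlinarith⟩
  · exact ⟨x / t + 1, x % t - t, by linarith, by nlinarith⟩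

/-- Davenport–Cassels: round `(x, y, z) / t` to the nearest lattice point `m` and take the second
intersection of the sphere with the line through `(x, y, z) / t` and `m`. -/
theorem exists_sum_three_sq_or_exists_lt {n t x y z : ℤ} (ht : 0 < t)
    (h : x ^ 2 + y ^ 2 + z ^ 2 = n * t ^ 2) :
    (∃ a b c : ℤ, a ^ 2 + b ^ 2 + c ^ 2 = n) ∨
      ∃ s a b c : ℤ, 0 < s ∧ s < t ∧ a ^ 2 + b ^ 2 + c ^ 2 = n * s ^ 2 := by
  obtain ⟨m₁, r₁, rfl, h₁⟩ := exists_eq_mul_add_four_mul_sq_le x ht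
  obtain ⟨m₂, r₂, rfl, h₂⟩ := exists_eq_mul_add_four_mul_sq_le y ht
  obtain ⟨m₃, r₃, rfl, h₃⟩ := exists_eq_mul_add_four_mul_sq_le z ht
  set M := m₁ ^ 2 + m₂ ^ 2 + m₃ ^ 2
  set s := n * t - 2 * (r₁ * m₁ + r₂ * m₂ + r₃ * m₃) - t * M
  have hs : t * s = r₁ ^ 2 + r₂ ^ 2 + r₃ ^ 2 := by linear_combination -h
  have hs0 : 0 ≤ s := (mul_nonneg_iff_of_pos_left ht).1 (by rw [hs]; positivity)
  rcases hs0.eq_or_lt with hs0 | hs0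
  · left
    rw [← hs0, mul_zero] at hs
    obtain ⟨rfl, rfl, rfl⟩ : r₁ = 0 ∧ r₂ = 0 ∧ r₃ = 0 := by
      refine ⟨?_, ?_, ?_⟩ <;> nlinarith [sq_nonneg r₁, sq_nonneg r₂, sq_nonneg r₃]
    exact ⟨m₁, m₂, m₃, mul_left_cancel₀ (pow_ne_zero 2 ht.ne') (by linear_combination h)⟩
  · right
    exact ⟨s, s * m₁ + (M - n) * r₁, s * m₂ + (M - n) * r₂, s * m₃ + (M - n) * r₃, hs0,
      by nlinarith, by linear_combination (M - n) ^ 2 * h⟩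

theorem exists_sum_three_sq_of_eq_mul_sq {n t x y z : ℤ} (ht : t ≠ 0)
    (h : x ^ 2 + y ^ 2 + z ^ 2 = n * t ^ 2) : ∃ a b c : ℤ, a ^ 2 + b ^ 2 + c ^ 2 = n := by
  suffices ∀ T : ℕ, 0 < T → ∀ x y z : ℤ, x ^ 2 + y ^ 2 + z ^ 2 = n * T ^ 2 →
      ∃ a b c : ℤ, a ^ 2 + b ^ 2 + c ^ 2 = n from
    this t.natAbs (by omega) x y z (by rwa [Int.natCast_natAbs, sq_abs])
  intro T
  induction T using Nat.strong_induction_on with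
  | _ T ih =>
    intro hT x y z h
    rcases exists_sum_three_sq_or_exists_lt (by exact_mod_cast hT) h with
      hn | ⟨s, a, b, c, hs, hsT, h'⟩
    · exact hn
    · lift s to ℕ using hs.le
      exact ih s (by exact_mod_cast hsT) (by exact_mod_cast hs) a b c h'

theorem exists_ne_zero_map_eq_zero_abs_le {ι G : Type*} [Fintype ι] [DecidableEq ι] [AddGroup G]
    [Fintype G] (f : (ι → ℤ) →+ G) (B : ι → ℕ) (hcard : Fintype.card G < ∏ i, (B i + 1)) :
    ∃ v : ι → ℤ, v ≠ 0 ∧ f v = 0 ∧ ∀ i, |v i| ≤ B i := by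
  let box := Fintype.piFinset fun i => range (B i + 1)
  have hlt : (univ : Finset G).card < box.card := by
    simpa [box, Fintype.card_piFinset] using hcard
  obtain ⟨p, hp, p', hp', hne, heq⟩ := exists_ne_map_eq_of_card_lt_of_maps_to hlt
    (f := fun p : ι → ℕ => f fun i => (p i : ℤ)) fun _ _ => mem_univ _
  simp only [box, Fintype.mem_piFinset, mem_range] at hp hp'
  refine ⟨fun i => (p i : ℤ) - p' i, fun h => hne (funext fun i => ?_), ?_, fun i => ?_⟩
  · simpa [sub_eq_zero] using congrFun h i
  · rw [show (fun i => (p i : ℤ) - p' i) = (fun i => (p i : ℤ)) - fun i => (p' i : ℤ) from rfl,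
      map_sub, heq, sub_self]
  · show |(p i : ℤ) - p' i| ≤ B i
    have := hp i
    have := hp' i
    exact abs_le.2 ⟨by omega, by omega⟩

theorem exists_sq_add_mul_sq_eq_mul_sq_of_dvd {n m X Y Z : ℤ} (hn : 0 < n) (hm : 0 < m)
    (hXYZ : ¬(X = 0 ∧ Y = 0 ∧ Z = 0)) (hX : X ^ 2 ≤ n * m) (hY : Y ^ 2 < m) (hZ : Z ^ 2 < n)
    (hdvd : n * m ∣ X ^ 2 - n * Y ^ 2 + m * Z ^ 2) :
    ∃ r u t : ℤ, t ≠ 0 ∧ r ^ 2 + m * u ^ 2 = n * t ^ 2 := by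
  obtain ⟨d, hd⟩ := hdvd
  have hnm : 0 < n * m := mul_pos hn hm
  have hd0 : -1 < d := lt_of_mul_lt_mul_left (a := n * m) (by nlinarith [sq_nonneg X]) hnm.le
  have hd1 : d < 2 := lt_of_mul_lt_mul_left (a := n * m) (by nlinarith [sq_nonneg Y]) hnm.le
  obtain rfl | rfl : d = 0 ∨ d = 1 := by omega
  · refine ⟨X, Z, Y, fun hY0 => hXYZ ?_, by linarith⟩
    subst hY0
    have hX0 : X = 0 := by nlinarith [sq_nonneg X, sq_nonneg Z]
    have hZ0 : Z = 0 := by nlinarith [sq_nonneg X, sq_nonneg Z]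
    exact ⟨hX0, rfl, hZ0⟩
  · -- compose `X² + m Z² = n (Y² + m)` with `Y² + m · 1² = Y² + m`
    exact ⟨X * Y + m * Z, X - Y * Z, Y ^ 2 + m, by positivity,
      by linear_combination (Y ^ 2 + m) * hd⟩

/-- A case of Legendre's theorem, by the box principle: a short vector of the lattice
`X ≡ σ Z (mod n)`, `X ≡ w Y (mod m)` (where `σ² = -m` mod `n`, `w² = n` mod `m`) either solves
`X² + m Z² = n Y²` or can be composed into a solution. -/
theorem exists_sq_add_mul_sq_eq_mul_sq {n m : ℕ} (hcop : n.Coprime m) (hn : ¬IsSquare n)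
    (hm : ¬IsSquare m) (hσ : IsSquare (-(m : ZMod n))) (hw : IsSquare (n : ZMod m)) :
    ∃ r u t : ℤ, t ≠ 0 ∧ r ^ 2 + m * u ^ 2 = n * t ^ 2 := by
  obtain ⟨σ, hσ⟩ := hσ
  obtain ⟨w, hw⟩ := hw
  have hn0 : 0 < n := Nat.pos_of_ne_zero fun h => hn ⟨0, h⟩
  have hm0 : 0 < m := Nat.pos_of_ne_zero fun h => hm ⟨0, h⟩
  have : NeZero n := ⟨hn0.ne'⟩
  have : NeZero m := ⟨hm0.ne'⟩
  let f : (Fin 3 → ℤ) →+ ZMod n × ZMod m :=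
    { toFun := fun v => ((v 0 : ZMod n) - σ * v 2, (v 0 : ZMod m) - w * v 1)
      map_zero' := by simp
      map_add' := fun v v' => by ext <;> simp <;> ring }
  have hcard :
      Fintype.card (ZMod n × ZMod m) < ∏ i, (![(n * m).sqrt, m.sqrt, n.sqrt] i + 1) := by
    have : (n * m) ^ 2 < (((n * m).sqrt + 1) * (m.sqrt + 1) * (n.sqrt + 1)) ^ 2 :=
      calc (n * m) ^ 2 = n * m * m * n := by ring
        _ < ((n * m).sqrt + 1) ^ 2 * (m.sqrt + 1) ^ 2 * (n.sqrt + 1) ^ 2 := by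
          gcongr <;> exact Nat.lt_succ_sqrt' _
        _ = _ := by ring
    simpa [Fin.prod_univ_three] using lt_of_pow_lt_pow_left₀ 2 (by positivity) this
  obtain ⟨v, hv0, hfv, hv⟩ := exists_ne_zero_map_eq_zero_abs_le f _ hcard
  obtain ⟨hv₀, hv₁⟩ := Prod.ext_iff.1 hfv
  simp only [f, AddMonoidHom.coe_mk, ZeroHom.coe_mk, Prod.fst_zero, Prod.snd_zero,
    sub_eq_zero] at hv₀ hv₁
  refine exists_sq_add_mul_sq_eq_mul_sq_of_dvd (X := v 0) (Y := v 1) (Z := v 2) (by positivity)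
    (by positivity) (fun h => hv0 ?_) ?_ ?_ ?_ ?_
  · ext i; fin_cases i <;> simp [h.1, h.2.1, h.2.2]
  · exact_mod_cast (sq_le_sqrt_sq_of_abs_le (hv 0)).trans (Nat.cast_le.2 (Nat.sqrt_le' _))
  · exact (sq_le_sqrt_sq_of_abs_le (hv 1)).trans_lt
      (by exact_mod_cast Nat.sqrt_sq_lt_of_not_isSquare hm)
  · exact (sq_le_sqrt_sq_of_abs_le (hv 2)).trans_lt
      (by exact_mod_cast Nat.sqrt_sq_lt_of_not_isSquare hn)
  · refine (Nat.isCoprime_iff_coprime.2 hcop).mul_dvd ?_ ?_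
    · rw [← ZMod.intCast_zmod_eq_zero_iff_dvd]
      push_cast
      linear_combination (v 0 + σ * v 2 : ZMod n) * hv₀ - (v 2 : ZMod n) ^ 2 * hσ
        - (v 1 : ZMod n) ^ 2 * ZMod.natCast_self n
    · rw [← ZMod.intCast_zmod_eq_zero_iff_dvd]
      push_cast
      linear_combination (v 0 + w * v 1 : ZMod m) * hv₁ - (v 1 : ZMod m) ^ 2 * hw
        + (v 2 : ZMod m) ^ 2 * ZMod.natCast_self m

theorem exists_sum_three_sq_of_isSquare_zmod {n m : ℕ} {a b : ℤ} (hcop : n.Coprime m)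
    (hn : ¬IsSquare n) (hm : ¬IsSquare m) (hab : a ^ 2 + b ^ 2 = m)
    (hσ : IsSquare (-(m : ZMod n))) (hw : IsSquare (n : ZMod m)) :
    ∃ x y z : ℤ, x ^ 2 + y ^ 2 + z ^ 2 = n := by
  obtain ⟨r, u, t, ht, h⟩ := exists_sq_add_mul_sq_eq_mul_sq hcop hn hm hσ hw
  exact exists_sum_three_sq_of_eq_mul_sq (x := r) (y := a * u) (z := b * u) ht
    (by linear_combination h + u ^ 2 * hab)

theorem exists_sum_three_sq_of_mod_four_eq_one {n : ℕ} (hn : n % 4 = 1) (hsq : ¬IsSquare n) :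
    ∃ x y z : ℤ, x ^ 2 + y ^ 2 + z ^ 2 = n := by
  have hodd : Odd n := Nat.odd_iff.2 (by omega)
  have : NeZero n := ⟨by omega⟩
  obtain ⟨q, hq, hq4, hqn⟩ := exists_prime_natCast_eq (N₁ := 4)
    (Nat.Coprime.pow_left 2 (Nat.coprime_two_left.2 hodd)) isUnit_one isUnit_one.neg
  have : Fact q.Prime := ⟨hq⟩
  have hq4 : q % 4 = 1 := by
    simpa using (ZMod.natCast_eq_natCast_iff' q 1 4).1 (by simpa using hq4)
  obtain ⟨a, b, hab⟩ := Nat.Prime.sq_add_sq (p := q) (by omega)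
  have hjac : jacobiSym n q = 1 := by
    rw [jacobiSym.quadratic_reciprocity_one_mod_four' hodd hq4,
      jacobiSym.mod_left' (a₂ := -1) ((ZMod.intCast_eq_intCast_iff' _ _ n).1 (by simpa using hqn)),
      jacobiSym.at_neg_one hodd, ZMod.χ₄_nat_one_mod_four hn]
  refine exists_sum_three_sq_of_isSquare_zmod (a := a) (b := b)
    ((ZMod.isUnit_iff_coprime q n).1 (hqn ▸ isUnit_one.neg)).symm hsq hq.prime.not_isSquare
    (by exact_mod_cast hab) ⟨1, by rw [hqn]; ring⟩ ?_
  simpa using ZMod.isSquare_of_jacobiSym_eq_one hjac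

theorem exists_sum_three_sq_of_mod_eight_eq_three {n : ℕ} (hn : n % 8 = 3) (hsq : ¬IsSquare n) :
    ∃ x y z : ℤ, x ^ 2 + y ^ 2 + z ^ 2 = n := by
  have hodd : Odd n := Nat.odd_iff.2 (by omega)
  have : NeZero n := ⟨by omega⟩
  have h2 : IsUnit (2 : ZMod n) := by
    simpa using (ZMod.isUnit_iff_coprime 2 n).2 (Nat.coprime_two_left.2 hodd)
  obtain ⟨q, hq, hq4, hqn⟩ := exists_prime_natCast_eq (N₁ := 4)
    (Nat.Coprime.pow_left 2 (Nat.coprime_two_left.2 hodd)) isUnit_one h2.neg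
  have : Fact q.Prime := ⟨hq⟩
  have hq4 : q % 4 = 1 := by
    simpa using (ZMod.natCast_eq_natCast_iff' q 1 4).1 (by simpa using hq4)
  have hqodd : Odd q := Nat.odd_iff.2 (by omega)
  obtain ⟨a, b, hab⟩ := Nat.Prime.sq_add_sq (p := q) (by omega)
  have hab : (a : ℤ) ^ 2 + b ^ 2 = q := by exact_mod_cast hab
  have hjac : jacobiSym n q = 1 := by
    rw [jacobiSym.quadratic_reciprocity_one_mod_four' hodd hq4,
      jacobiSym.mod_left' (a₂ := -2) ((ZMod.intCast_eq_intCast_iff' _ _ n).1 (by simpa using hqn)),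
      jacobiSym.at_neg_two hodd, ZMod.χ₈'_nat_eq_if_mod_eight]
    simp [hn, Nat.odd_iff.1 hodd]
  refine exists_sum_three_sq_of_isSquare_zmod (m := 2 * q) (a := a + b) (b := a - b)
    (Nat.Coprime.mul_right (Nat.coprime_two_right.2 hodd)
      ((ZMod.isUnit_iff_coprime q n).1 (by simpa [hqn] using h2.neg)).symm)
    hsq (not_isSquare_of_mod_four_eq_two (by omega)) (by push_cast; linear_combination 2 * hab)
    ⟨2, by push_cast; rw [hqn]; ring⟩ ?_
  simpa using ZMod.isSquare_intCast_two_mul hqodd (by exact_mod_cast hodd)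
    (ZMod.isSquare_of_jacobiSym_eq_one hjac)

theorem exists_sum_three_sq_two_mul_of_odd {j : ℕ} (hj : Odd j) :
    ∃ x y z : ℤ, x ^ 2 + y ^ 2 + z ^ 2 = (2 * j : ℕ) := by
  have : NeZero j := ⟨by rintro rfl; exact absurd hj (by decide)⟩
  have hj' := Nat.odd_iff.1 hj
  have h8 : IsUnit ((2 * j - 1 : ℕ) : ZMod 8) :=
    (ZMod.isUnit_iff_coprime _ 8).2 (Nat.Coprime.pow_right 3 (Nat.coprime_two_right.2
      (Nat.odd_iff.2 (by omega))))
  -- `q ≡ 2j - 1 (mod 8)` makes `(2 / q) = (-1 / j)`, hence `(2j / q) = 1`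
  obtain ⟨q, hq, hq8, hqj⟩ := exists_prime_natCast_eq
    (Nat.Coprime.pow_left 3 (Nat.coprime_two_left.2 hj)) h8 isUnit_one.neg
  have : Fact q.Prime := ⟨hq⟩
  have hq8 : q % 8 = (2 * j - 1) % 8 := (ZMod.natCast_eq_natCast_iff' _ _ 8).1 hq8
  have hq4 : q % 4 = 1 := by omega
  have hqodd : Odd q := Nat.odd_iff.2 (by omega)
  obtain ⟨a, b, hab⟩ := Nat.Prime.sq_add_sq (p := q) (by omega)
  have hjac : jacobiSym (2 * j : ℕ) q = 1 := by
    rw [Nat.cast_mul, Nat.cast_two, jacobiSym.mul_left, jacobiSym.at_two hqodd,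
      jacobiSym.quadratic_reciprocity_one_mod_four' hj hq4,
      jacobiSym.mod_left' (a₂ := -1) ((ZMod.intCast_eq_intCast_iff' _ _ j).1 (by simpa using hqj)),
      jacobiSym.at_neg_one hj, ZMod.χ₈_nat_eq_if_mod_eight, ZMod.χ₄_nat_eq_if_mod_four]
    rcases (by omega : j % 4 = 1 ∧ q % 8 = 1 ∨ j % 4 = 3 ∧ q % 8 = 5) with
      ⟨h1, h2⟩ | ⟨h1, h2⟩ <;> simp [h1, h2, hj', Nat.odd_iff.1 hqodd]
  refine exists_sum_three_sq_of_isSquare_zmod (a := a) (b := b)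
    (Nat.Coprime.mul_left (Nat.coprime_two_left.2 hqodd)
      ((ZMod.isUnit_iff_coprime q j).1 (hqj ▸ isUnit_one.neg)).symm)
    (not_isSquare_of_mod_four_eq_two (by omega)) hq.prime.not_isSquare (by exact_mod_cast hab)
    ?_ (by simpa using ZMod.isSquare_of_jacobiSym_eq_one hjac)
  simpa using ZMod.isSquare_intCast_two_mul hj (a := -q) (by simpa using hqodd) ⟨1, by simp [hqj]⟩

theorem exists_sum_three_sq {n : ℕ} (h4 : n % 4 ≠ 0) (h8 : n % 8 ≠ 7) :
    ∃ x y z : ℤ, x ^ 2 + y ^ 2 + z ^ 2 = n := by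
  by_cases hsq : IsSquare n
  · obtain ⟨r, rfl⟩ := hsq
    exact ⟨r, 0, 0, by push_cast; ring⟩
  rcases (by omega : n % 4 = 1 ∨ n % 8 = 3 ∨ n % 4 = 2) with hn | hn | hn
  · exact exists_sum_three_sq_of_mod_four_eq_one hn hsq
  · exact exists_sum_three_sq_of_mod_eight_eq_three hn hsq
  · obtain ⟨j, rfl⟩ : ∃ j, n = 2 * j := ⟨n / 2, by omega⟩
    exact exists_sum_three_sq_two_mul_of_odd (Nat.odd_iff.2 (by omega))

theorem exists_sq_sum_add_sum_sq_of_sum_three_sq {k x y z t : ℤ}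
    (h : x ^ 2 + y ^ 2 + z ^ 2 + 20 * t ^ 2 = 2 * k) :
    ∃ a b c d : ℤ, (a + b + c + d) ^ 2 + (a ^ 2 + b ^ 2 + c ^ 2 + d ^ 2) = 2 * k := by
  obtain ⟨s, hs⟩ : Even (x + y + z) := by
    have : Even (x ^ 2 + y ^ 2 + z ^ 2) := ⟨k - 10 * t ^ 2, by linarith⟩
    simpa [Int.even_add, Int.even_pow] using this
  exact ⟨s + t, x - s + t, y - s + t, z - s + t,
    by linear_combination h + (x + y + z - 4 * s + 10 * t) * hs⟩

theorem exists_sq_sum_add_sum_sq_eq_two_mul (k : ℕ) :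
    ∃ a b c d : ℤ, (a + b + c + d) ^ 2 + (a ^ 2 + b ^ 2 + c ^ 2 + d ^ 2) = 2 * k := by
  induction k using Nat.strong_induction_on with
  | _ k ih =>
    rcases (by omega : k = 0 ∨ (0 < k ∧ k % 4 = 0) ∨ k % 2 = 1 ∨ (k % 4 = 2 ∧ k % 16 ≠ 14) ∨
      k % 16 = 14) with rfl | ⟨hk, hk4⟩ | hk | ⟨hk, hk16⟩ | hk
    · exact ⟨0, 0, 0, 0, by simp⟩
    · obtain ⟨j, rfl⟩ : ∃ j, k = 4 * j := ⟨k / 4, by omega⟩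
      obtain ⟨a, b, c, d, h⟩ := ih j (by omega)
      exact ⟨2 * a, 2 * b, 2 * c, 2 * d, by push_cast; linear_combination 4 * h⟩
    · obtain ⟨x, y, z, h⟩ := exists_sum_three_sq (n := 2 * k) (by omega) (by omega)
      exact exists_sq_sum_add_sum_sq_of_sum_three_sq (x := x) (y := y) (z := z) (t := 0)
        (by push_cast at h; linear_combination h)
    · obtain ⟨j, rfl⟩ : ∃ j, k = 4 * j + 2 := ⟨k / 4, by omega⟩
      obtain ⟨x, y, z, h⟩ := exists_sum_three_sq (n := 2 * j + 1) (by omega) (by omega)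
      exact exists_sq_sum_add_sum_sq_of_sum_three_sq (x := 2 * x) (y := 2 * y) (z := 2 * z)
        (t := 0) (by push_cast at h ⊢; linear_combination 4 * h)
    · obtain ⟨j, rfl⟩ : ∃ j, k = 16 * j + 14 := ⟨k / 16, by omega⟩
      obtain ⟨x, y, z, h⟩ := exists_sum_three_sq (n := 8 * j + 2) (by omega) (by omega)
      exact exists_sq_sum_add_sum_sq_of_sum_three_sq (x := 2 * x) (y := 2 * y) (z := 2 * z)
        (t := 1) (by push_cast at h ⊢; linear_combination 4 * h)

theorem exists_sq_sum_add_sum_sq_eq_two_mul_of_four_le {N : ℕ} (hN : 4 ≤ N) (k : ℕ) :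
    ∃ x : Fin N → ℤ, (∑ i, x i) ^ 2 + ∑ i, x i ^ 2 = 2 * k := by
  obtain ⟨a, b, c, d, h⟩ := exists_sq_sum_add_sum_sq_eq_two_mul k
  obtain ⟨m, rfl⟩ := Nat.exists_eq_add_of_le' hN
  exact ⟨Fin.append (0 : Fin m → ℤ) ![a, b, c, d], by
    simpa [Fin.sum_univ_add, Fin.sum_univ_four] using h⟩

theorem sq_sum_eq_sum_sq_add_two_mul_sum_Ioi {ι R : Type*} [Fintype ι] [LinearOrder ι]
    [LocallyFiniteOrderBot ι] [LocallyFiniteOrderTop ι] [CommSemiring R] (x : ι → R) :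
    (∑ i, x i) ^ 2 = ∑ i, x i ^ 2 + 2 * ∑ i, ∑ j ∈ Ioi i, x i * x j := by
  have hsplit : ∀ i, ∑ j, x i * x j
      = x i ^ 2 + ∑ j ∈ Iio i, x i * x j + ∑ j ∈ Ioi i, x i * x j := by
    intro i
    have hne : univ.erase i = Iio i ∪ Ioi i := by ext j; simp [lt_or_lt_iff_ne, eq_comm]
    rw [← add_sum_erase _ _ (mem_univ i), hne,
      sum_union (disjoint_left.2 fun j hj hj' => lt_asymm (mem_Iio.1 hj) (mem_Ioi.1 hj')), sq,
      add_assoc]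
  have hswap : ∑ i, ∑ j ∈ Iio i, x i * x j = ∑ i, ∑ j ∈ Ioi i, x i * x j := by
    rw [sum_comm' (t' := univ) (s' := fun j => Ioi j) (by simp)]
    simp_rw [mul_comm]
  rw [sq, sum_mul_sum, sum_congr rfl fun i _ => hsplit i, sum_add_distrib, sum_add_distrib,
    hswap]
  ring

theorem stmt_6 (n : ℕ) (hn : 5 ≤ n) (k : ℕ) :
    ∃ x : Fin (n - 1) → ℤ,
      (∑ i, (x i) ^ 2) + (∑ i, ∑ j ∈ Finset.Ioi i, x i * x j) = (k : ℤ) := by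
  obtain ⟨x, hx⟩ := exists_sq_sum_add_sum_sq_eq_two_mul_of_four_le (N := n - 1) (by omega) k
  exact ⟨x, by linarith [sq_sum_eq_sum_sq_add_two_mul_sum_Ioi x]⟩
end

section
/- Let p = 2n + 1 be an odd prime. In the polynomial ring (Z/pZ)[T_1, ..., T_n], the coefficient of the monomial T_1^{n−1} T_2^{n−1} ⋯ T_n^{n−1} in the square of the Vandermonde polynomial ∏_{1 ≤ i < j ≤ n} (T_i − T_j)^2 equals (−1)^{n(n−1)/2} · n!, which is nonzero modulo p. -/
/-!
Writing `V` for the Vandermonde matrix of the variables, the product is `(det V)²` and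
`det V = ∑_σ sign σ · ∏ᵢ Tᵢ^{σ i}`. In `(det V)²` the monomial `∏ᵢ Tᵢ^{n-1}` arises from the
pairs `(σ, τ)` with `σ i + τ i = n - 1` for all `i`, i.e. `τ = rev ∘ σ`; each of these `n!`
pairs contributes `sign σ · sign (rev ∘ σ) = sign rev = (-1)^{n(n-1)/2}`. Modulo `p = 2n + 1`
the coefficient is nonzero because `p > n` does not divide `n!`.
-/

open Equiv Equiv.Perm MvPolynomial Finset

theorem Fin.revPerm_succ (n : ℕ) :
    (Fin.revPerm : Perm (Fin (n + 1))) =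
      finRotate (n + 1) *
        finSumFinEquiv.permCongr (Perm.sumCongr Fin.revPerm (1 : Perm (Fin 1))) := by
  refine Equiv.ext fun i => Fin.lastCases ?_ (fun j => ?_) i
  · simp only [Fin.revPerm_apply, Fin.rev_last, Perm.coe_mul, Function.comp_apply, permCongr_apply,
      finSumFinEquiv_symm_last, Equiv.sumCongr_apply, Perm.coe_one, Sum.map_inr, id_eq,
      finSumFinEquiv_apply_right, finRotate_apply]
    exact (Fin.last_add_one n).symm
  · simp only [Fin.revPerm_apply, Fin.rev_castSucc, Perm.coe_mul, Function.comp_apply,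
      permCongr_apply, finSumFinEquiv_symm_apply_castSucc, Equiv.sumCongr_apply, Perm.coe_one,
      Sum.map_inl, finSumFinEquiv_apply_left, finRotate_apply]
    exact Fin.coeSucc_eq_succ.symm

theorem Fin.sign_revPerm (n : ℕ) : sign (Fin.revPerm : Perm (Fin n)) = (-1) ^ n.choose 2 := by
  induction n with
  | zero => rfl
  | succ n ih =>
    rw [Fin.revPerm_succ, Perm.sign_mul, sign_finRotate, sign_permCongr, sign_sumCongr, ih,
      Perm.sign_one, Nat.choose_succ_succ, Nat.choose_one_right, pow_add, mul_one,
      add_tsub_cancel_right]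

theorem prod_sub_sq_eq_det_vandermonde_sq {R : Type*} [CommRing R] {n : ℕ} (v : Fin n → R) :
    ∏ i : Fin n, ∏ j ∈ Ioi i, (v i - v j) ^ 2 = (Matrix.vandermonde v).det ^ 2 := by
  simp only [Matrix.det_vandermonde, ← prod_pow]
  exact prod_congr rfl fun i _ => prod_congr rfl fun j _ => by ring

theorem MvPolynomial.prod_univ_X_pow_eq_monomial {R σ : Type*} [CommSemiring R] [Fintype σ]
    (e : σ → ℕ) :
    ∏ i, (X i : MvPolynomial σ R) ^ e i = monomial (Finsupp.equivFunOnFinite.symm e) 1 := by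
  rw [monomial_eq, C_1, one_mul, Finsupp.prod_fintype _ _ fun _ => pow_zero _]
  rfl

noncomputable def vandermondeExponent {n : ℕ} (σ : Perm (Fin n)) : Fin n →₀ ℕ :=
  Finsupp.equivFunOnFinite.symm fun i => (σ i : ℕ)

theorem det_vandermonde_X (R : Type*) [CommRing R] (n : ℕ) :
    (Matrix.vandermonde (X : Fin n → MvPolynomial (Fin n) R)).det =
      ∑ σ : Perm (Fin n), monomial (vandermondeExponent σ) ((sign σ : ℤ) : R) := by
  rw [← Matrix.det_transpose, Matrix.det_apply']
  refine sum_congr rfl fun σ _ => ?_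
  simp only [Matrix.transpose_apply, Matrix.vandermonde_apply, prod_univ_X_pow_eq_monomial]
  rw [← map_intCast (C : R →+* MvPolynomial (Fin n) R), C_mul_monomial, mul_one]
  rfl

theorem vandermondeExponent_add_eq_iff {n : ℕ} (σ τ : Perm (Fin n)) :
    vandermondeExponent σ + vandermondeExponent τ = Finsupp.equivFunOnFinite.symm (fun _ => n - 1)
      ↔ τ = Fin.revPerm * σ := by
  simp only [Finsupp.ext_iff, Equiv.ext_iff, Finsupp.add_apply, vandermondeExponent,
    Finsupp.coe_equivFunOnFinite_symm, Perm.mul_apply, Fin.revPerm_apply, Fin.ext_iff,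
    Fin.val_rev]
  refine forall_congr' fun i => ?_
  have := (σ i).isLt
  have := (τ i).isLt
  omega

theorem coeff_det_vandermonde_X_sq (R : Type*) [CommRing R] (n : ℕ) :
    coeff (Finsupp.equivFunOnFinite.symm fun _ => n - 1)
        ((Matrix.vandermonde (X : Fin n → MvPolynomial (Fin n) R)).det ^ 2) =
      n.factorial * ((sign (Fin.revPerm : Perm (Fin n)) : ℤ) : R) := by
  have sign_mul_sign_revPerm_mul (σ : Perm (Fin n)) :
      ((sign σ : ℤ) : R) * ((sign (Fin.revPerm * σ) : ℤ) : R) =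
        ((sign (Fin.revPerm : Perm (Fin n)) : ℤ) : R) := by
    rw [Perm.sign_mul, mul_comm (sign _), ← Int.cast_mul, ← Units.val_mul, ← mul_assoc,
      Int.units_mul_self, one_mul]
  simp only [sq, det_vandermonde_X, sum_mul_sum, monomial_mul, coeff_sum, coeff_monomial,
    vandermondeExponent_add_eq_iff, sum_ite_eq', mem_univ, if_true, sign_mul_sign_revPerm_mul,
    sum_const, card_univ, Fintype.card_perm, Fintype.card_fin, nsmul_eq_mul]

theorem coeff_prod_sub_sq (R : Type*) [CommRing R] (n : ℕ) :
    coeff (Finsupp.equivFunOnFinite.symm fun _ => n - 1)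
        (∏ i : Fin n, ∏ j ∈ Ioi i, (X i - X j : MvPolynomial (Fin n) R) ^ 2) =
      (-1 : R) ^ n.choose 2 * n.factorial := by
  rw [prod_sub_sq_eq_det_vandermonde_sq, coeff_det_vandermonde_X_sq, Fin.sign_revPerm, mul_comm]
  norm_num

theorem stmt_12 (n p : ℕ) (hp : p = 2 * n + 1) (hprime : p.Prime) :
    MvPolynomial.coeff (Finsupp.equivFunOnFinite.symm fun _ : Fin n => n - 1)
        (∏ i : Fin n, ∏ j ∈ Finset.Ioi i,
          (MvPolynomial.X i - MvPolynomial.X j : MvPolynomial (Fin n) (ZMod p)) ^ 2)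
      = (-1 : ZMod p) ^ (n * (n - 1) / 2) * (n.factorial : ZMod p) ∧
    (-1 : ZMod p) ^ (n * (n - 1) / 2) * (n.factorial : ZMod p) ≠ 0 := by
  have factorial_ne_zero : (n.factorial : ZMod p) ≠ 0 := by
    rw [Ne, ZMod.natCast_eq_zero_iff, hprime.dvd_factorial]
    omega
  refine ⟨by rw [coeff_prod_sub_sq, Nat.choose_two_right], ?_⟩
  rwa [Ne, (isUnit_neg_one.pow _).mul_right_eq_zero]
end

section
/- Let p = 2n + 1 be an odd prime and let O ⊆ (Z/pZ)^n be the orbit of (1, 2, ..., n) under the hyperoctahedral group action (permuting coordinates and changing signs of coordinates). Then O − O = (Z/pZ)^n: every element of (Z/pZ)^n is the difference of two elements of O. -/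
/-!
For `y : Fin n → K` put `D(y) = det (y i ^ (2 j + 1)) = (∏ i, y i) * V(y²)`, the basic
anti-invariant of the hyperoctahedral group. In `ZMod (2n + 1)`, `D(y) ≠ 0` says exactly that `y`
lies in the orbit of `(1, …, n)`, so it suffices to show `∑ₓ D(x) D(x + a) ≠ 0`: then some `x`
has `x, x + a ∈ O`.

Expanding both determinants reduces the sum to one-variable sums `∑_y y^m (y + c)^l` with
`m = 2s + 1`, `l = 2t + 1`. In a field with `q = 2n + 1` elements such a sum vanishes when
`m + l < q - 1` and equals `-1` when `m + l = q - 1`. Since `∑ᵢ (σ i + τ i + 1) = n²`, the product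
over `i` vanishes unless `τ = rev ∘ σ`, and the total is `n! · sign(rev) · (-1)ⁿ`, which is nonzero
modulo the prime `2n + 1 > n`.
-/

open Finset Matrix Equiv

namespace FiniteField

variable {K : Type*} [Field K] [Fintype K]

theorem sum_pow_card_sub_one : ∑ x : K, x ^ (Fintype.card K - 1) = -1 := by
  classical
  have hq : 1 < Fintype.card K := Fintype.one_lt_card
  rw [← add_sum_erase _ _ (mem_univ 0), zero_pow (by omega), zero_add,
    sum_congr rfl fun x hx => pow_card_sub_one_eq_one x (ne_of_mem_erase hx), sum_const,
    card_erase_of_mem (mem_univ 0), Finset.card_univ, nsmul_one, Nat.cast_sub hq.le,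
    cast_card_eq_zero, Nat.cast_one, zero_sub]

theorem sum_pow_of_le_card_sub_one {k : ℕ} (hk : k ≤ Fintype.card K - 1) :
    ∑ x : K, x ^ k = if k = Fintype.card K - 1 then -1 else 0 := by
  split_ifs with h
  · exact h ▸ sum_pow_card_sub_one
  · exact sum_pow_lt_card_sub_one K k (lt_of_le_of_ne hk h)

theorem sum_pow_mul_add_pow (a : K) {m l : ℕ} (h : m + l ≤ Fintype.card K - 1) :
    ∑ x : K, x ^ m * (x + a) ^ l = if m + l = Fintype.card K - 1 then -1 else 0 := by
  calc ∑ x : K, x ^ m * (x + a) ^ l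
      = ∑ j ∈ range (l + 1), (∑ x : K, x ^ (m + j)) * (a ^ (l - j) * l.choose j) := by
        simp_rw [add_pow, mul_sum, sum_mul]
        rw [sum_comm]
        exact sum_congr rfl fun j _ => sum_congr rfl fun x _ => by ring
    _ = ∑ j ∈ range (l + 1),
          if l = j then (if m + l = Fintype.card K - 1 then -1 else 0) else 0 := by
        refine sum_congr rfl fun j hj => ?_
        have hj : j ≤ l := Nat.lt_succ_iff.mp (mem_range.mp hj)
        rw [sum_pow_of_le_card_sub_one (by omega)]
        rcases hj.lt_or_eq with hj | rfl
        · simp [hj.ne', show m + j ≠ Fintype.card K - 1 by omega]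
        · simp
    _ = _ := by rw [sum_ite_eq, if_pos (self_mem_range_succ l)]

end FiniteField

theorem Fin.eq_revPerm_mul_of_forall_le_add {n : ℕ} (σ τ : Perm (Fin n))
    (h : ∀ i, n ≤ (σ i : ℕ) + τ i + 1) : τ = Fin.revPerm * σ := by
  have hsum : ∑ _i : Fin n, n = ∑ i, ((σ i : ℕ) + τ i + 1) := by
    calc ∑ _i : Fin n, n = ∑ i : Fin n, ((i : ℕ) + Fin.revPerm i + 1) :=
          sum_congr rfl fun i _ => by simp only [Fin.revPerm_apply, Fin.val_rev]; omega
      _ = ∑ i, ((σ i : ℕ) + τ i + 1) := by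
          simp only [sum_add_distrib, Equiv.sum_comp σ (fun i : Fin n => (i : ℕ)),
            Equiv.sum_comp τ (fun i : Fin n => (i : ℕ)),
            Equiv.sum_comp Fin.revPerm (fun i : Fin n => (i : ℕ))]
  have heq := (sum_eq_sum_iff_of_le fun i _ => h i).mp hsum
  ext i
  have := heq i (mem_univ i)
  simp only [Perm.coe_mul, Function.comp_apply, Fin.revPerm_apply, Fin.val_rev]
  omega

section OddVandermonde

variable {R : Type*} [CommRing R] {n : ℕ}

def oddVandermonde (v : Fin n → R) : Matrix (Fin n) (Fin n) R :=
  Matrix.of fun i j => v i ^ (2 * (j : ℕ) + 1)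

theorem oddVandermonde_eq_diagonal_mul_vandermonde (v : Fin n → R) :
    oddVandermonde v = diagonal v * vandermonde (v ^ 2) := by
  ext i j
  simp only [oddVandermonde, pow_succ, pow_mul, pow_zero, one_mul, of_apply, vandermonde,
    Pi.pow_apply, diagonal_mul]
  ring

theorem det_oddVandermonde (v : Fin n → R) :
    (oddVandermonde v).det = (∏ i, v i) * (vandermonde (v ^ 2)).det := by
  rw [oddVandermonde_eq_diagonal_mul_vandermonde, det_mul, det_diagonal]

theorem det_oddVandermonde_ne_zero_iff [IsDomain R] {v : Fin n → R} :
    (oddVandermonde v).det ≠ 0 ↔ (∀ i, v i ≠ 0) ∧ Function.Injective (v ^ 2) := by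
  rw [det_oddVandermonde, mul_ne_zero_iff, prod_ne_zero_iff, det_vandermonde_ne_zero_iff]
  simp

theorem det_oddVandermonde_eq_sum (v : Fin n → R) :
    (oddVandermonde v).det =
      ∑ σ : Perm (Fin n), (Perm.sign σ : R) * ∏ i, v i ^ (2 * (σ i : ℕ) + 1) := by
  rw [← det_transpose, det_apply']
  rfl

theorem sum_det_oddVandermonde_mul_det_oddVandermonde_add [Fintype R] (a : Fin n → R) :
    ∑ x : Fin n → R, (oddVandermonde x).det * (oddVandermonde (x + a)).det =
      ∑ σ : Perm (Fin n), ∑ τ : Perm (Fin n), (Perm.sign σ : R) * Perm.sign τ *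
        ∏ i, ∑ y : R, y ^ (2 * (σ i : ℕ) + 1) * (y + a i) ^ (2 * (τ i : ℕ) + 1) := by
  simp_rw [det_oddVandermonde_eq_sum, sum_mul_sum, Fintype.prod_sum, mul_sum]
  rw [sum_comm]
  refine sum_congr rfl fun σ _ => ?_
  rw [sum_comm]
  refine sum_congr rfl fun τ _ => sum_congr rfl fun x _ => ?_
  simp only [Pi.add_apply, prod_mul_distrib]
  ring

open Nat in
theorem sum_det_oddVandermonde_mul_det_oddVandermonde_add_eq {K : Type*} [Field K] [Fintype K]
    (hK : Fintype.card K = 2 * n + 1) (a : Fin n → K) :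
    ∑ x : Fin n → K, (oddVandermonde x).det * (oddVandermonde (x + a)).det =
      n ! * Perm.sign (Fin.revPerm : Perm (Fin n)) * (-1) ^ n := by
  have hfactor : ∀ (s t : Fin n) (c : K), (s : ℕ) + t + 1 ≤ n →
      ∑ y : K, y ^ (2 * (s : ℕ) + 1) * (y + c) ^ (2 * (t : ℕ) + 1) =
        if (s : ℕ) + t + 1 = n then -1 else 0 := fun s t c hst => by
    rw [FiniteField.sum_pow_mul_add_pow c (by omega), hK]
    congr 1
    simp only [eq_iff_iff]
    omega
  have hrow : ∀ σ : Perm (Fin n), ∑ τ : Perm (Fin n), (Perm.sign σ : K) * Perm.sign τ *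
      ∏ i, ∑ y : K, y ^ (2 * (σ i : ℕ) + 1) * (y + a i) ^ (2 * (τ i : ℕ) + 1) =
        Perm.sign (Fin.revPerm : Perm (Fin n)) * (-1) ^ n := fun σ => by
    rw [sum_eq_single (Fin.revPerm * σ)]
    · have hrev : ∀ i, (σ i : ℕ) + (Fin.revPerm * σ : Perm (Fin n)) i + 1 = n := fun i => by
        simp only [Perm.coe_mul, Function.comp_apply, Fin.revPerm_apply, Fin.val_rev]
        omega
      rw [prod_congr rfl fun i _ => (hfactor _ _ (a i) (hrev i).le).trans (if_pos (hrev i)),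
        prod_const, Finset.card_univ, Fintype.card_fin, map_mul, Units.val_mul, Int.cast_mul]
      have hsq : (Perm.sign σ : K) * Perm.sign σ = 1 := by
        rw [← Int.cast_mul, ← Units.val_mul, Int.units_mul_self, Units.val_one, Int.cast_one]
      linear_combination (Perm.sign (Fin.revPerm : Perm (Fin n)) : K) * (-1) ^ n * hsq
    · intro τ _ hτ
      obtain ⟨i, hi⟩ : ∃ i, (σ i : ℕ) + τ i + 1 < n := by
        by_contra! h
        exact hτ (Fin.eq_revPerm_mul_of_forall_le_add σ τ h)
      rw [prod_eq_zero (mem_univ i) ((hfactor _ _ _ hi.le).trans (if_neg hi.ne)), mul_zero]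
    · simp
  rw [sum_det_oddVandermonde_mul_det_oddVandermonde_add, sum_congr rfl fun σ _ => hrow σ,
    sum_const, Finset.card_univ, Fintype.card_perm, Fintype.card_fin, nsmul_eq_mul, mul_assoc]

end OddVandermonde

theorem ZMod.exists_eq_sign_mul_succ {n : ℕ} {y : ZMod (2 * n + 1)} (hy : y ≠ 0) :
    ∃ k : Fin n, ∃ e : ℤ, (e = 1 ∨ e = -1) ∧
      y = (e : ZMod (2 * n + 1)) * ((k + 1 : ℕ) : ZMod (2 * n + 1)) := by
  obtain ⟨m, hm, rfl⟩ : ∃ m < 2 * n + 1, (m : ZMod (2 * n + 1)) = y :=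
    ⟨y.val, ZMod.val_lt y, ZMod.natCast_zmod_val y⟩
  have hm0 : m ≠ 0 := by rintro rfl; exact hy Nat.cast_zero
  rcases le_or_gt m n with h | h
  · refine ⟨⟨m - 1, by omega⟩, 1, .inl rfl, ?_⟩
    rw [Int.cast_one, one_mul, Nat.sub_add_cancel (by omega)]
  · refine ⟨⟨2 * n - m, by omega⟩, -1, .inr rfl, ?_⟩
    rw [Int.cast_neg, Int.cast_one, neg_one_mul, eq_neg_iff_add_eq_zero, ← Nat.cast_add,
      show m + (2 * n - m + 1) = 2 * n + 1 by omega, ZMod.natCast_self]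

theorem exists_perm_signs_of_injective_sq {n : ℕ} {y : Fin n → ZMod (2 * n + 1)}
    (h0 : ∀ i, y i ≠ 0) (hinj : Function.Injective (y ^ 2)) :
    ∃ σ : Perm (Fin n), ∃ ε : Fin n → ℤ, (∀ i, ε i = 1 ∨ ε i = -1) ∧
      ∀ i, y i = (ε i : ZMod (2 * n + 1)) * (((σ i : ℕ) + 1 : ℕ) : ZMod (2 * n + 1)) := by
  choose k ε hε hy using fun i => ZMod.exists_eq_sign_mul_succ (h0 i)
  have hsq : ∀ i, (y ^ 2) i = ((k i + 1 : ℕ) : ZMod (2 * n + 1)) ^ 2 := fun i => by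
    rw [Pi.pow_apply, hy i, mul_pow]
    rcases hε i with h | h <;> simp [h]
  have hk : Function.Injective k := fun i j hij => hinj (by rw [hsq, hsq, hij])
  exact ⟨Equiv.ofBijective k (Finite.injective_iff_bijective.mp hk), ε, hε, hy⟩

theorem stmt_13 (n p : ℕ) (hp : p = 2 * n + 1) (hprime : p.Prime)
    (O : Set (Fin n → ZMod p))
    (hO : O = {x | ∃ σ : Equiv.Perm (Fin n), ∃ ε : Fin n → ℤ,
        (∀ i, ε i = 1 ∨ ε i = -1) ∧
        ∀ i, x i = (ε i : ZMod p) * ((((σ i : ℕ) + 1 : ℕ) : ZMod p))}) :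
    ∀ a : Fin n → ZMod p, ∃ u ∈ O, ∃ v ∈ O, a = u - v := by
  subst hp hO
  intro a
  have := Fact.mk hprime
  have hS : ∑ x, (oddVandermonde x).det * (oddVandermonde (x + a)).det ≠ 0 := by
    rw [sum_det_oddVandermonde_mul_det_oddVandermonde_add_eq (ZMod.card _)]
    have hfact : (n.factorial : ZMod (2 * n + 1)) ≠ 0 := by
      rw [Ne, ZMod.natCast_eq_zero_iff, hprime.dvd_factorial]
      omega
    exact mul_ne_zero (mul_ne_zero hfact ((Perm.sign _).isUnit.map (Int.castRingHom _)).ne_zero)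
      (pow_ne_zero _ (neg_ne_zero.mpr one_ne_zero))
  obtain ⟨x, -, hx⟩ := exists_ne_zero_of_sum_ne_zero hS
  obtain ⟨hv, hu⟩ := mul_ne_zero_iff.mp hx
  obtain ⟨hv0, hvinj⟩ := det_oddVandermonde_ne_zero_iff.mp hv
  obtain ⟨hu0, huinj⟩ := det_oddVandermonde_ne_zero_iff.mp hu
  exact ⟨x + a, exists_perm_signs_of_injective_sq hu0 huinj,
    x, exists_perm_signs_of_injective_sq hv0 hvinj, by abel⟩
end

section
/- For the root system of finite type A_n with fundamental weights ω_1, ..., ω_n and longest Weyl group element w_0, and for 1 ≤ ℓ ≤ n, the height of ρ_ℓ − w_0(ρ_ℓ), where ρ_ℓ = ω_n + ω_{n−1} + ... + ω_{n−ℓ+1}, equals ℓ(ℓ+1)(3n − 2ℓ + 2)/6. -/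
/-!
Since `w₀ ω_i = -ω_{n+1-i}`, the height of `ρ_ℓ - w₀ ρ_ℓ` is the sum of `h(ω_i) + h(ω_{n+1-i})` over
the last `ℓ` indices, and `h(ω_i) = i(n-i+1)/2` is invariant under `i ↦ n+1-i`. The height is therefore
`∑_{i=n-ℓ+1}^{n} i(n-i+1)`, evaluated by induction on `ℓ`. In the code `i : Fin n` stands for `ω_{i+1}`.
-/

open Finset

lemma sum_Ico_succ_mul_sub (n ℓ : ℕ) (h : ℓ ≤ n) :
    ∑ i ∈ Ico (n - ℓ) n, ((i : ℚ) + 1) * ((n : ℚ) - i)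
      = (ℓ : ℚ) * ((ℓ : ℚ) + 1) * (3 * (n : ℚ) - 2 * (ℓ : ℚ) + 2) / 6 := by
  induction ℓ with
  | zero => simp
  | succ k ih =>
    have hlt : n - (k + 1) < n := by omega
    have hsucc : n - (k + 1) + 1 = n - k := by omega
    rw [sum_eq_sum_Ico_succ_bot hlt, hsucc, ih (by omega), Nat.cast_sub h]
    push_cast
    ring

lemma Fin.succ_mul_sub_rev {n : ℕ} (i : Fin n) :
    ((i.rev : ℚ) + 1) * ((n : ℚ) - i.rev) = ((i : ℚ) + 1) * ((n : ℚ) - i) := by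
  have hrev : (i.rev : ℚ) = n - i - 1 := by
    rw [Fin.val_rev, Nat.cast_sub i.isLt]
    push_cast
    ring
  rw [hrev]
  ring

lemma sum_filter_le_val_eq_sum_Ico {M : Type*} [AddCommMonoid M] (n m : ℕ) (f : ℕ → M) :
    ∑ i ∈ univ.filter (fun i : Fin n => m ≤ (i : ℕ)), f i = ∑ i ∈ Ico m n, f i := by
  rw [sum_filter, Fin.sum_univ_eq_sum_range (fun i => if m ≤ i then f i else 0), ← sum_filter]
  congr 1
  ext i
  simp [and_comm]

lemma height_sub_antiinvolution_sum {ι V : Type*} [AddCommGroup V] [Module ℚ V]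
    (ω : ι → V) (σ : ι → ι) (ht : V →ₗ[ℚ] ℚ) (w : V →ₗ[ℚ] V) (hw : ∀ i, w (ω i) = -ω (σ i))
    (s : Finset ι) :
    ht (∑ i ∈ s, ω i - w (∑ i ∈ s, ω i)) = ∑ i ∈ s, (ht (ω i) + ht (ω (σ i))) := by
  simp only [map_sum, hw, sum_neg_distrib, sub_neg_eq_add, map_add, sum_add_distrib]

theorem stmt_15_general (n ℓ : ℕ) (hln : ℓ ≤ n)
    (V : Type*) [AddCommGroup V] [Module ℚ V]
    (ω : Fin n → V) (ht : V →ₗ[ℚ] ℚ) (w0 : V →ₗ[ℚ] V)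
    (hht : ∀ i : Fin n, ht (ω i) = (((i : ℕ) : ℚ) + 1) * ((n : ℚ) - ((i : ℕ) : ℚ)) / 2)
    (hw0 : ∀ i : Fin n, w0 (ω i) = - ω i.rev) :
    ht ((∑ i ∈ Finset.univ.filter (fun i : Fin n => n - ℓ ≤ (i : ℕ)), ω i)
        - w0 (∑ i ∈ Finset.univ.filter (fun i : Fin n => n - ℓ ≤ (i : ℕ)), ω i))
      = (ℓ : ℚ) * ((ℓ : ℚ) + 1) * (3 * (n : ℚ) - 2 * (ℓ : ℚ) + 2) / 6 := by
  have hpair : ∀ i : Fin n, ht (ω i) + ht (ω i.rev) = ((i : ℚ) + 1) * ((n : ℚ) - i) := by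
    intro i
    rw [hht, hht, Fin.succ_mul_sub_rev]
    ring
  rw [height_sub_antiinvolution_sum ω Fin.rev ht w0 hw0, sum_congr rfl fun i _ => hpair i,
    sum_filter_le_val_eq_sum_Ico n (n - ℓ) fun i => ((i : ℚ) + 1) * ((n : ℚ) - i)]
  exact sum_Ico_succ_mul_sub n ℓ hln

theorem stmt_15 (n ℓ : ℕ) (hl : 1 ≤ ℓ) (hln : ℓ ≤ n)
    (V : Type*) [AddCommGroup V] [Module ℚ V]
    (ω : Fin n → V) (ht : V →ₗ[ℚ] ℚ) (w0 : V →ₗ[ℚ] V)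
    (hht : ∀ i : Fin n, ht (ω i) = (((i : ℕ) : ℚ) + 1) * ((n : ℚ) - ((i : ℕ) : ℚ)) / 2)
    (hw0 : ∀ i : Fin n, w0 (ω i) = - ω i.rev) :
    ht ((∑ i ∈ Finset.univ.filter (fun i : Fin n => n - ℓ ≤ (i : ℕ)), ω i)
        - w0 (∑ i ∈ Finset.univ.filter (fun i : Fin n => n - ℓ ≤ (i : ℕ)), ω i))
      = (ℓ : ℚ) * ((ℓ : ℚ) + 1) * (3 * (n : ℚ) - 2 * (ℓ : ℚ) + 2) / 6 :=
  stmt_15_general n ℓ hln V ω ht w0 hht hw0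
end

section
/- For finite type C_n with fundamental weights ω_i and longest element w_0 = −1, and for 1 ≤ ℓ ≤ n, the height of 2ρ_ℓ, where ρ_ℓ = ω_n + ... + ω_{n−ℓ+1}, equals ((6n^2 − 1)ℓ − ℓ^2(2ℓ − 3))/6. -/
private def gg (n i : ℕ) : ℚ :=
  (((i : ℕ) : ℚ) + 1) * (((i : ℕ) : ℚ) + 1 - 1) / 2
    + (((i : ℕ) : ℚ) + 1) * ((n : ℚ) - (((i : ℕ) : ℚ) + 1))
    + (((i : ℕ) : ℚ) + 1) / 2

private lemma sum_gg (n : ℕ) : ∀ m : ℕ, ∑ i ∈ Finset.range m, gg n i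
    = (n : ℚ) * m * (m + 1) / 2 - (m : ℚ) * (m + 1) * (2 * m + 1) / 12 := by
  intro m
  induction m with
  | zero => simp
  | succ k ih =>
    rw [Finset.sum_range_succ, ih, gg]
    push_cast
    ring

theorem stmt_16 (n ℓ : ℕ) (hl : 1 ≤ ℓ) (hln : ℓ ≤ n)
    (V : Type*) [AddCommGroup V] [Module ℚ V]
    (ω : Fin n → V) (ht : V →ₗ[ℚ] ℚ)
    (hht : ∀ i : Fin n, ht (ω i) =
      (((i : ℕ) : ℚ) + 1) * (((i : ℕ) : ℚ) + 1 - 1) / 2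
        + (((i : ℕ) : ℚ) + 1) * ((n : ℚ) - (((i : ℕ) : ℚ) + 1))
        + (((i : ℕ) : ℚ) + 1) / 2) :
    ht ((2 : ℚ) • ∑ i ∈ Finset.univ.filter (fun i : Fin n => n - ℓ ≤ (i : ℕ)), ω i)
      = ((6 * (n : ℚ) ^ 2 - 1) * (ℓ : ℚ) - (ℓ : ℚ) ^ 2 * (2 * (ℓ : ℚ) - 3)) / 6 := by
  rw [map_smul, map_sum, smul_eq_mul]
  have h1 : ∑ i ∈ Finset.univ.filter (fun i : Fin n => n - ℓ ≤ (i : ℕ)), ht (ω i)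
      = ∑ i ∈ Finset.univ.filter (fun i : Fin n => n - ℓ ≤ (i : ℕ)), gg n (i : ℕ) := by
    refine Finset.sum_congr rfl fun i _ => ?_
    rw [hht i, gg]
  rw [h1]
  have h2 : ∑ i ∈ Finset.univ.filter (fun i : Fin n => n - ℓ ≤ (i : ℕ)), gg n (i : ℕ)
      = ∑ i ∈ (Finset.range n).filter (fun i => n - ℓ ≤ i), gg n i := by
    rw [Finset.sum_filter, Finset.sum_filter]
    exact Fin.sum_univ_eq_sum_range (fun a => if n - ℓ ≤ a then gg n a else 0) n
  have h3 : (Finset.range n).filter (fun i => n - ℓ ≤ i) = Finset.Ico (n - ℓ) n := by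
    ext i; simp [Finset.mem_Ico]; omega
  rw [h2, h3, Finset.sum_Ico_eq_sub _ (Nat.sub_le n ℓ), sum_gg, sum_gg]
  have hc : ((n - ℓ : ℕ) : ℚ) = (n : ℚ) - (ℓ : ℚ) := by
    push_cast [hln]; ring
  rw [hc]
  ring
end
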